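/- arXiv:2504.20875 — 2 statements merged into one kernel-verified Lean document; each statement's English description precedes it below -/
import Mathlib

section
/- For integers k ≥ r ≥ 1 and m ≥ 1, adding k(m−1), k(m−2), …, k, 0 to the parts of a partition in BP_{k,r}(m) gives a bijection onto BD_{k,r}(m); consequently Σ_{λ ∈ BD_{k,r}(m)} q^{|λ|} = q^{k·C(m,2)} Σ_{λ ∈ BP_{k,r}(m)} q^{|λ|}, where C(m,2) = m(m−1)/2. -/
/-- The finite q-Pochhammer symbol `(t;q)_n = ∏_{i=0}^{n-1} (1 - t qⁱ)`. -/
noncomputable def qPoch (t q : ℂ) (n : ℕ) : ℂ := ∏ i ∈ Finset.range n, (1 - t * q ^ i)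

/-- The infinite q-Pochhammer symbol `(t;q)_∞ = ∏_{i≥0} (1 - t qⁱ)`. -/
noncomputable def qPochInf (t q : ℂ) : ℂ := ∏' i : ℕ, (1 - t * q ^ i)

/-- The Gaussian binomial coefficient `[A choose B]` in base `q`:
`(q;q)_A / ((q;q)_B (q;q)_{A-B})` for `A ≥ B ≥ 0`, and `0` otherwise. -/
noncomputable def gbinom (q : ℂ) (A B : ℕ) : ℂ :=
  if B ≤ A then qPoch q q A / (qPoch q q B * qPoch q q (A - B)) else 0

/-- `lcount k c l` is the number of parts of `l` congruent to `c` modulo `k`. -/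
def lcount (k c : ℕ) (l : List ℕ) : ℕ := (l.filter (fun x => x % k = c % k)).length

/-- `phi k N` is the residue of `N` modulo `k`, taken in `{1, …, k}`. -/
def phi (k N : ℕ) : ℕ := if N % k = 0 then k else N % k

/-- Add `k(ℓ-1), k(ℓ-2), …, k, 0` to the successive parts of a list of length `ℓ`. -/
def stretch (k : ℕ) (l : List ℕ) : List ℕ := l.mapIdx fun i x => x + k * (l.length - 1 - i)

/-- Membership in `BP_{k,r}(m)`: partitions with exactly `m` parts, all between `1` and `r`. -/
def memBP (r m : ℕ) (l : List ℕ) : Prop :=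
  l.Pairwise (· ≥ ·) ∧ l.length = m ∧ ∀ x ∈ l, 1 ≤ x ∧ x ≤ r

/-- Membership in `BD_{k,r}(m)`: partitions `(λ_1,…,λ_m)` with exactly `m` parts, each part
`≡ s (mod k)` for some `1 ≤ s ≤ r`, `φ_{k,r}(λ_i) ≥ φ_{k,r}(λ_{i+1})` and
`k ≤ λ_i - λ_{i+1} < 2k` for consecutive parts, and `1 ≤ λ_m ≤ r`. -/
def memBD (k r m : ℕ) (l : List ℕ) : Prop :=
  l.Pairwise (· ≥ ·) ∧ l.length = m ∧ (∀ x ∈ l, 0 < x ∧ 1 ≤ phi k x ∧ phi k x ≤ r) ∧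
    l.Chain' (fun x y => phi k y ≤ phi k x ∧ y + k ≤ x ∧ x < y + 2 * k) ∧
    (∀ x : ℕ, l.getLast? = some x → 1 ≤ x ∧ x ≤ r)

/-!
Stretching adds `k·n` to a part followed by `n` further parts. Since `r ≤ k`, a part `a ∈ [1, r]` of
a partition in `BP` is recovered from its image as `φ`, and two consecutive parts `a ≥ b` of it become
`a + k(n+1)` and `b + kn`, whose difference `a - b + k` lies in `[k, 2k)`; so the `BD` conditions
on consecutive parts are exactly `a ≥ b`. Conversely, if `y = b + kn` with `b ∈ [1, r]` and `x` follows
the `BD` rules, then `x - k(n+1) ∈ [b, b + k)` and `φ(x) ≥ b` force `x - k(n+1) = φ(x) ≤ r`, which peels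
the preimage off a `BD` partition from the right. The generating function identity follows since
stretching a list of length `m` adds `k·C(m,2)` to its sum.
-/

def IsBDStep (k x y : ℕ) : Prop := phi k y ≤ phi k x ∧ y + k ≤ x ∧ x < y + 2 * k

section Stretch

variable (k : ℕ)

@[simp]
theorem stretch_nil : stretch k [] = [] := rfl

theorem stretch_cons (a : ℕ) (l : List ℕ) :
    stretch k (a :: l) = (a + k * l.length) :: stretch k l := by
  simp only [stretch, List.mapIdx_cons, List.length_cons]
  congr 2
  funext i x
  congr 2
  omega

@[simp]
theorem length_stretch (l : List ℕ) : (stretch k l).length = l.length := by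
  simp [stretch]

theorem sum_stretch (l : List ℕ) : (stretch k l).sum = l.sum + k * l.length.choose 2 := by
  induction l with
  | nil => simp
  | cons a l ih =>
    rw [stretch_cons, List.sum_cons, ih, List.sum_cons, List.length_cons, Nat.choose_succ_succ',
      Nat.choose_one_right]
    ring

theorem stretch_injective : Function.Injective (stretch k) := by
  intro l₁ l₂ h
  induction l₁ generalizing l₂ with
  | nil => simpa [eq_comm] using congrArg List.length h
  | cons a t ih =>
    cases l₂ with
    | nil => simpa using congrArg List.length h
    | cons b t₂ =>
      have hlen : t.length = t₂.length := by simpa using congrArg List.length h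
      rw [stretch_cons, stretch_cons, hlen, List.cons.injEq] at h
      rw [Nat.add_right_cancel h.1, ih h.2]

theorem exists_eq_add_mul_of_mem_stretch {l : List ℕ} {x : ℕ} (hx : x ∈ stretch k l) :
    ∃ a ∈ l, ∃ n, x = a + k * n := by
  induction l with
  | nil => simp at hx
  | cons a t ih =>
    rw [stretch_cons, List.mem_cons] at hx
    rcases hx with rfl | hx
    · exact ⟨a, List.mem_cons_self, _, rfl⟩
    · obtain ⟨b, hb, n, rfl⟩ := ih hx
      exact ⟨b, List.mem_cons_of_mem _ hb, n, rfl⟩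

@[simp]
theorem getLast?_stretch (l : List ℕ) : (stretch k l).getLast? = l.getLast? := by
  induction l with
  | nil => rfl
  | cons a t ih =>
    cases t with
    | nil => simp [stretch_cons]
    | cons b t =>
      rw [stretch_cons, stretch_cons, List.getLast?_cons_cons, ← stretch_cons, ih,
        List.getLast?_cons_cons]

end Stretch

section Phi

variable {k : ℕ}

theorem phi_add_mul (x n : ℕ) : phi k (x + k * n) = phi k x := by
  simp only [phi, Nat.add_mul_mod_self_left]

theorem phi_eq_self {x : ℕ} (h₀ : 0 < x) (hk : x ≤ k) : phi k x = x := by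
  rcases hk.eq_or_lt with rfl | hlt
  · simp [phi]
  · rw [phi, Nat.mod_eq_of_lt hlt, if_neg h₀.ne']

theorem phi_eq_sub {x : ℕ} (hk : k < x) (h2k : x < 2 * k) : phi k x = x - k := by
  have hmod : x % k = x - k := by
    rw [Nat.mod_eq_sub_mod hk.le, Nat.mod_eq_of_lt (by omega)]
  rw [phi, hmod, if_neg (by omega)]

end Phi

section Steps

variable {k r : ℕ}

theorem isBDStep_add_mul (hrk : r ≤ k) {a b : ℕ} (ha : 1 ≤ a ∧ a ≤ r) (hb : 1 ≤ b ∧ b ≤ r)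
    (hba : b ≤ a) (n : ℕ) : IsBDStep k (a + k * (n + 1)) (b + k * n) := by
  rw [IsBDStep, phi_add_mul, phi_add_mul, phi_eq_self (by omega) (by omega),
    phi_eq_self (by omega) (by omega)]
  refine ⟨hba, ?_, ?_⟩ <;> linarith

theorem exists_eq_add_mul_of_isBDStep (hrk : r ≤ k) {x b n : ℕ} (hb : 1 ≤ b ∧ b ≤ r)
    (hx : phi k x ≤ r) (h : IsBDStep k x (b + k * n)) :
    ∃ a, b ≤ a ∧ a ≤ r ∧ x = a + k * (n + 1) := by
  obtain ⟨hphi, hge, hlt⟩ := h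
  rw [phi_add_mul, phi_eq_self (by omega) (by omega)] at hphi
  have hmul : k * (n + 1) = k * n + k := by ring
  set a := x - k * (n + 1)
  have hx_eq : x = a + k * (n + 1) := by omega
  rw [hx_eq, phi_add_mul] at hphi hx
  -- `b ≤ a < b + k ≤ 2k`, and `a > k` would give `φ(a) = a - k < b`
  have hak : a ≤ k := by
    by_contra! hak
    rw [phi_eq_sub hak (by omega)] at hphi
    omega
  rw [phi_eq_self (by omega) hak] at hphi hx
  exact ⟨a, hphi, hx, hx_eq⟩

theorem isChain_stretch (hrk : r ≤ k) {l : List ℕ} (hl : l.IsChain (· ≥ ·))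
    (hmem : ∀ x ∈ l, 1 ≤ x ∧ x ≤ r) : (stretch k l).IsChain (IsBDStep k) := by
  induction l with
  | nil => simp
  | cons a t ih =>
    cases t with
    | nil => simp [stretch_cons]
    | cons b t =>
      rw [List.isChain_cons_cons] at hl
      have ih' := ih hl.2 fun x hx => hmem x (List.mem_cons_of_mem _ hx)
      rw [stretch_cons] at ih'
      rw [stretch_cons, stretch_cons, List.length_cons]
      refine List.IsChain.cons_cons ?_ ih'
      exact isBDStep_add_mul hrk (hmem a (by simp)) (hmem b (by simp)) hl.1 _

theorem exists_stretch_eq (hrk : r ≤ k) {l : List ℕ} (hphi : ∀ x ∈ l, phi k x ≤ r)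
    (hl : l.IsChain (IsBDStep k)) (hlast : ∀ x, l.getLast? = some x → 1 ≤ x ∧ x ≤ r) :
    ∃ l', l'.IsChain (· ≥ ·) ∧ (∀ x ∈ l', 1 ≤ x ∧ x ≤ r) ∧ stretch k l' = l := by
  induction l with
  | nil => exact ⟨[], by simp⟩
  | cons x t ih =>
    cases t with
    | nil => exact ⟨[x], by simp, by simpa using hlast x rfl, by simp [stretch_cons]⟩
    | cons y t =>
      rw [List.isChain_cons_cons] at hl
      obtain ⟨t', ht'chain, ht'mem, ht'eq⟩ :=
        ih (fun z hz => hphi z (List.mem_cons_of_mem _ hz)) hl.2 (by simpa using hlast)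
      obtain _ | ⟨b, t'⟩ := t'
      · simp at ht'eq
      rw [stretch_cons] at ht'eq
      obtain ⟨rfl, rfl⟩ := List.cons.inj ht'eq
      have hb := ht'mem b (by simp)
      obtain ⟨a, hba, har, rfl⟩ := exists_eq_add_mul_of_isBDStep hrk hb (hphi _ (by simp)) hl.1
      refine ⟨a :: b :: t', ht'chain.cons_cons hba, ?_, by rw [stretch_cons, stretch_cons]; rfl⟩
      simp only [List.mem_cons, forall_eq_or_imp] at ht'mem ⊢
      exact ⟨⟨by omega, har⟩, ht'mem⟩

end Steps

theorem stretch_bijOn {k r : ℕ} (hrk : r ≤ k) (m : ℕ) :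
    Set.BijOn (stretch k) {l | memBP r m l} {l | memBD k r m l} := by
  refine ⟨?_, (stretch_injective k).injOn, ?_⟩
  · rintro l ⟨hsorted, rfl, hmem⟩
    have hchain := isChain_stretch hrk (List.isChain_iff_pairwise.mpr hsorted) hmem
    refine ⟨List.isChain_iff_pairwise.mp (hchain.imp fun _ _ h => by unfold IsBDStep at h; omega),
      length_stretch k l, fun x hx => ?_, hchain, fun x hx => by
      simpa using hmem x (List.mem_of_getLast? (by simpa using hx))⟩
    obtain ⟨a, ha, n, rfl⟩ := exists_eq_add_mul_of_mem_stretch k hx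
    have ha := hmem a ha
    rw [phi_add_mul, phi_eq_self (by omega) (by omega)]
    omega
  · rintro l ⟨-, rfl, hmem, hchain, hlast⟩
    obtain ⟨l', hl'chain, hl'mem, rfl⟩ :=
      exists_stretch_eq hrk (fun x hx => (hmem x hx).2.2) hchain hlast
    exact ⟨l', ⟨List.isChain_iff_pairwise.mp hl'chain, (length_stretch k l').symm, hl'mem⟩, rfl⟩

theorem shift_BP_to_BD_general (k r m : ℕ) (hrk : r ≤ k) :
    Set.BijOn (stretch k) {l : List ℕ | memBP r m l} {l : List ℕ | memBD k r m l}
    ∧ ∀ q : ℂ,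
        ∑ᶠ l ∈ {l : List ℕ | memBD k r m l}, q ^ l.sum
          = q ^ (k * Nat.choose m 2) * ∑ᶠ l ∈ {l : List ℕ | memBP r m l}, q ^ l.sum := by
  refine ⟨stretch_bijOn hrk m, fun q => ?_⟩
  rw [mul_finsum_mem, ← finsum_mem_eq_of_bijOn _ (stretch_bijOn hrk m)]
  rintro l ⟨-, rfl, -⟩
  rw [sum_stretch, pow_add, mul_comm]

/-- Adding `k(m-1), k(m-2), …, k, 0` to the parts gives a bijection from `BP_{k,r}(m)` onto
`BD_{k,r}(m)`; consequently
`Σ_{λ ∈ BD_{k,r}(m)} q^{|λ|} = q^{k C(m,2)} Σ_{λ ∈ BP_{k,r}(m)} q^{|λ|}`. -/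
theorem shift_BP_to_BD (k r m : ℕ) (hr : 1 ≤ r) (hrk : r ≤ k) (hm : 1 ≤ m) :
    Set.BijOn (stretch k) {l : List ℕ | memBP r m l} {l : List ℕ | memBD k r m l}
    ∧ ∀ q : ℂ,
        ∑ᶠ l ∈ {l : List ℕ | memBD k r m l}, q ^ l.sum
          = q ^ (k * Nat.choose m 2) * ∑ᶠ l ∈ {l : List ℕ | memBP r m l}, q ^ l.sum :=
  shift_BP_to_BD_general k r m hrk
end

section
/- For integers a, b, k with k ≥ b > a ≥ 1 and m ≥ 1: Σ_{λ ∈ BR_{a,b,k}(m)} u^{ℓ_a(λ)} v^{ℓ_b(λ)} q^{|λ|} = Σ_{h=0}^{m} u^{m−h} v^{h} q^{ma + k·C(h,2) + (b−a)h} [m choose h]_k. -/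
/-- Membership in `BR_{a,b,k}(m)`: partitions `(λ_1,…,λ_m)` with exactly `m` parts, each
`≡ a` or `b (mod k)`, only parts `≡ a (mod k)` possibly repeated, `λ_m ∈ {a, b}`, and for
consecutive parts `λ_i - λ_{i+1} ≤ k` with strict inequality if `λ_{i+1} ≡ a (mod k)`. -/
def memBR (a b k m : ℕ) (l : List ℕ) : Prop :=
  l.Pairwise (· ≥ ·) ∧ l.length = m ∧
    (∀ x ∈ l, 0 < x ∧ (x % k = a % k ∨ x % k = b % k)) ∧
    (∀ x : ℕ, x % k = b % k → l.count x ≤ 1) ∧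
    (l.getLast? = some a ∨ l.getLast? = some b) ∧
    l.Chain' (fun x y => x ≤ y + k ∧ (y % k = a % k → x < y + k))

/-!
A partition in `BR_{a,b,k}(m)` is determined by the word of residues (`a` or `b`) of its parts:
the difference conditions force `λ_i = c_i + k · #{j > i | c_j = b}`, so `brList` maps the words
of length `m` bijectively onto `BR_{a,b,k}(m)`. Prepending a letter multiplies the weight by
`u q^a` or `v q^b` and replaces `v` by `v q^k`, so the generating function is
`∏_{i<m} (u q^a + v q^{b+ki})`, which the finite q-binomial theorem expands into the right-hand
side.
-/

open Finset

lemma qPoch_succ (t Q : ℂ) (n : ℕ) : qPoch t Q (n + 1) = qPoch t Q n * (1 - t * Q ^ n) :=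
  prod_range_succ _ _

@[simp] lemma qPoch_zero (t Q : ℂ) : qPoch t Q 0 = 1 := prod_range_zero _

section GaussianBinomial

variable {Q : ℂ}

lemma pow_succ_ne_one_of_norm_lt_one (hQ : ‖Q‖ < 1) (n : ℕ) : Q ^ (n + 1) ≠ 1 := fun h => by
  have := pow_lt_one₀ (norm_nonneg Q) hQ n.succ_ne_zero
  rw [← norm_pow, h, norm_one] at this
  exact this.false

lemma qPoch_self_ne_zero (hQ : ∀ n, Q ^ (n + 1) ≠ 1) (n : ℕ) : qPoch Q Q n ≠ 0 :=
  prod_ne_zero_iff.2 fun i _ => sub_ne_zero.2 fun h => hQ i (by rw [pow_succ']; exact h.symm)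

lemma gbinom_zero_right (hQ : ∀ n, Q ^ (n + 1) ≠ 1) (n : ℕ) : gbinom Q n 0 = 1 := by
  simp [gbinom, qPoch_zero, qPoch_self_ne_zero hQ]

lemma gbinom_self (hQ : ∀ n, Q ^ (n + 1) ≠ 1) (n : ℕ) : gbinom Q n n = 1 := by
  simp [gbinom, qPoch_zero, qPoch_self_ne_zero hQ]

lemma gbinom_of_lt {n j : ℕ} (h : n < j) : gbinom Q n j = 0 := by
  simp [gbinom, h]

lemma gbinom_succ_succ (hQ : ∀ n, Q ^ (n + 1) ≠ 1) (n j : ℕ) :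
    gbinom Q (n + 1) (j + 1) = gbinom Q n j + Q ^ (j + 1) * gbinom Q n (j + 1) := by
  rcases lt_trichotomy j n with hjn | rfl | hnj
  · obtain ⟨i, rfl⟩ := Nat.exists_eq_add_of_lt hjn
    have hP := qPoch_self_ne_zero hQ
    simp only [gbinom, show j ≤ j + i + 1 by omega, show j + 1 ≤ j + i + 1 by omega,
      show j + 1 ≤ j + i + 1 + 1 by omega, if_true, show j + i + 1 - j = i + 1 by omega,
      show j + i + 1 - (j + 1) = i by omega, show j + i + 1 + 1 - (j + 1) = i + 1 by omega]
    rw [qPoch_succ Q Q (j + i + 1), qPoch_succ Q Q j, qPoch_succ Q Q i]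
    obtain ⟨hj, hj'⟩ := mul_ne_zero_iff.1 (qPoch_succ Q Q j ▸ hP (j + 1))
    obtain ⟨hi, hi'⟩ := mul_ne_zero_iff.1 (qPoch_succ Q Q i ▸ hP (i + 1))
    field_simp
    ring
  · rw [gbinom_self hQ, gbinom_self hQ, gbinom_of_lt (Nat.lt_succ_self j)]
    ring
  · rw [gbinom_of_lt (by omega), gbinom_of_lt hnj, gbinom_of_lt (by omega)]
    ring

theorem prod_add_mul_pow_eq_sum_gbinom (hQ : ∀ n, Q ^ (n + 1) ≠ 1) (x y : ℂ) (n : ℕ) :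
    ∏ i ∈ range n, (x + y * Q ^ i)
      = ∑ p ∈ antidiagonal n, x ^ p.1 * y ^ p.2 * Q ^ p.2.choose 2 * gbinom Q n p.2 := by
  induction n generalizing y with
  | zero => simp [gbinom_zero_right hQ]
  | succ n ih =>
    -- Split off the factor `i = 0` and use the hypothesis at `y * Q`; Pascal's rule
    -- `gbinom_succ_succ` then matches the coefficients.
    set g : ℕ × ℕ → ℂ := fun p => x ^ p.1 * (y * Q) ^ p.2 * Q ^ p.2.choose 2 * gbinom Q n p.2
    have hchoose (j : ℕ) : (j + 1).choose 2 = j.choose 2 + j := by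
      rw [Nat.choose_succ_succ, Nat.choose_one_right, add_comm]
    have hx : x * ∑ p ∈ antidiagonal n, g p = x ^ (n + 1) + ∑ p ∈ antidiagonal n,
        x ^ p.1 * (y * Q) ^ (p.2 + 1) * Q ^ (p.2 + 1).choose 2 * gbinom Q n (p.2 + 1) := by
      have h := (Nat.sum_antidiagonal_succ (n := n) (f := g)).symm.trans
        (Nat.sum_antidiagonal_succ' (n := n) (f := g))
      simp only [g, gbinom_of_lt (Nat.lt_succ_self n), gbinom_zero_right hQ, Nat.choose_zero_succ,
        mul_zero, zero_add, pow_zero, mul_one] at h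
      rw [mul_sum, ← h]
      exact sum_congr rfl fun p _ => by ring
    have hprod : ∏ i ∈ range n, (x + y * Q ^ (i + 1)) = ∑ p ∈ antidiagonal n, g p := by
      rw [← ih (y * Q)]
      simp only [pow_succ', mul_assoc]
    rw [prod_range_succ', hprod, Nat.sum_antidiagonal_succ', mul_add, mul_comm _ x, hx,
      gbinom_zero_right hQ, add_assoc, sum_mul, ← sum_add_distrib]
    simp only [pow_zero, mul_one, Nat.choose_zero_succ, gbinom_succ_succ hQ, g]
    congr 1
    refine sum_congr rfl fun p _ => ?_
    rw [hchoose]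
    ring

end GaussianBinomial

lemma Nat.eq_of_mod_eq_of_lt_add {x z k : ℕ} (h : x % k = z % k) (hxz : x < z + k)
    (hzx : z < x + k) : x = z :=
  Nat.ModEq.eq_of_abs_lt h (by rw [abs_sub_lt_iff]; omega)

def brList (a b k : ℕ) : List Bool → List ℕ
  | [] => []
  | c :: cs => ((if c then b else a) + k * cs.count true) :: brList a b k cs

section BRList

variable {a b k : ℕ}

@[simp] lemma length_brList (cs : List Bool) : (brList a b k cs).length = cs.length := by
  induction cs <;> simp_all [brList]

lemma lcount_cons (k r x : ℕ) (l : List ℕ) :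
    lcount k r (x :: l) = lcount k r l + if x % k = r % k then 1 else 0 := by
  by_cases h : x % k = r % k <;> simp [lcount, h]

lemma lcount_brList (hab : a % k ≠ b % k) (cs : List Bool) :
    lcount k a (brList a b k cs) = cs.count false ∧
      lcount k b (brList a b k cs) = cs.count true := by
  induction cs with
  | nil => simp [brList, lcount]
  | cons c cs ih =>
    cases c <;> simp [brList, lcount_cons, ih, Nat.add_mul_mod_self_left, hab, Ne.symm hab]

lemma map_mod_brList (hab : a % k ≠ b % k) (cs : List Bool) :
    (brList a b k cs).map (fun x => decide (x % k = b % k)) = cs := by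
  induction cs with
  | nil => rfl
  | cons c cs ih => cases c <;> simp [brList, ih, hab]

lemma brList_injective (hab : a % k ≠ b % k) : Function.Injective (brList a b k) :=
  Function.LeftInverse.injective (map_mod_brList hab)

def partWeight (a b k : ℕ) (u v q : ℂ) (l : List ℕ) : ℂ :=
  u ^ lcount k a l * v ^ lcount k b l * q ^ l.sum

lemma partWeight_brList_cons (hab : a % k ≠ b % k) (u v q : ℂ) (c : Bool) (cs : List Bool) :
    partWeight a b k u v q (brList a b k (c :: cs))
      = (if c then v * q ^ b else u * q ^ a) *
          partWeight a b k u (v * q ^ k) q (brList a b k cs) := by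
  rw [partWeight, partWeight, (lcount_brList hab _).1, (lcount_brList hab _).2,
    (lcount_brList hab cs).1, (lcount_brList hab cs).2, brList, List.sum_cons]
  cases c <;> simp only [List.count_cons_self, List.count_cons_of_ne, ne_eq, Bool.false_eq_true,
    Bool.true_eq_false, not_false_eq_true, ↓reduceIte, pow_add, pow_one, pow_mul, mul_pow] <;> ring

theorem sum_partWeight_brList_ofFn (hab : a % k ≠ b % k) (u q : ℂ) (n : ℕ) (v : ℂ) :
    ∑ f : Fin n → Bool, partWeight a b k u v q (brList a b k (List.ofFn f))
      = ∏ i ∈ range n, (u * q ^ a + v * q ^ b * (q ^ k) ^ i) := by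
  induction n generalizing v with
  | zero => simp [partWeight, brList, lcount]
  | succ n ih =>
    rw [← (Fin.consEquiv fun _ => Bool).sum_comp, Fintype.sum_prod_type, Fintype.sum_bool,
      prod_range_succ']
    simp only [Fin.consEquiv_apply, List.ofFn_succ, Fin.cons_zero, Fin.cons_succ,
      partWeight_brList_cons hab, ← mul_sum, ih]
    have hshift : ∏ i ∈ range n, (u * q ^ a + v * q ^ k * q ^ b * (q ^ k) ^ i)
        = ∏ i ∈ range n, (u * q ^ a + v * q ^ b * (q ^ k) ^ (i + 1)) :=
      prod_congr rfl fun i _ => by ring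
    simp only [if_true, Bool.false_eq_true, if_false, hshift, pow_zero, mul_one]
    ring

lemma mod_ne_mod_of_lt (ha : 1 ≤ a) (hab : a < b) (hbk : b ≤ k) : a % k ≠ b % k := by
  rw [Nat.mod_eq_of_lt (hab.trans_le hbk)]
  rcases hbk.eq_or_lt with rfl | hbk
  · rw [Nat.mod_self]; omega
  · rw [Nat.mod_eq_of_lt hbk]; omega

lemma le_and_lt_of_mem_brList (hab : a < b) (hbk : b ≤ k) {cs : List Bool} {y : ℕ}
    (hy : y ∈ brList a b k cs) : y ≤ a + k * cs.count true ∧ y < b + k * cs.count true := by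
  induction cs with
  | nil => simp [brList] at hy
  | cons c cs ih =>
    simp only [brList, List.mem_cons] at hy
    rcases hy with rfl | hy
    · cases c <;> simp only [Bool.false_eq_true, ↓reduceIte, ne_eq, not_false_eq_true,
      List.count_cons_of_ne, List.count_cons_self, mul_add, mul_one] <;> omega
    · have := ih hy
      cases c <;> simp only [ne_eq, Bool.false_eq_true, not_false_eq_true,
        List.count_cons_of_ne, List.count_cons_self, mul_add, mul_one] <;> omega

lemma pairwise_brList (hab : a < b) (hbk : b ≤ k) (cs : List Bool) :
    (brList a b k cs).Pairwise (· ≥ ·) := by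
  induction cs with
  | nil => simp [brList]
  | cons c cs ih =>
    refine List.pairwise_cons.2 ⟨fun y hy => ?_, ih⟩
    have := (le_and_lt_of_mem_brList hab hbk hy).1
    cases c <;> simp only [Bool.false_eq_true, ↓reduceIte, ge_iff_le] <;> omega

lemma count_brList_le_one (ha : 1 ≤ a) (hab : a < b) (hbk : b ≤ k) (cs : List Bool) {x : ℕ}
    (hx : x % k = b % k) : (brList a b k cs).count x ≤ 1 := by
  induction cs with
  | nil => simp [brList]
  | cons c cs ih =>
    rw [brList, List.count_cons]
    by_cases hhead : (if c then b else a) + k * cs.count true = x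
    · have hc : c = true := by
        cases c
        · rw [← hhead, Nat.add_mul_mod_self_left] at hx
          exact absurd hx (mod_ne_mod_of_lt ha hab hbk)
        · rfl
      have : x ∉ brList a b k cs := fun hmem => by
        have := (le_and_lt_of_mem_brList hab hbk hmem).2
        simp only [hc, ↓reduceIte] at hhead
        omega
      simp [List.count_eq_zero_of_not_mem this, hhead]
    · simpa [hhead] using ih

lemma isChain_brList (ha : 1 ≤ a) (hab : a < b) (hbk : b ≤ k) (cs : List Bool) :
    (brList a b k cs).IsChain (fun x y => x ≤ y + k ∧ (y % k = a % k → x < y + k)) := by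
  induction cs with
  | nil => simp [brList]
  | cons c cs ih =>
    cases cs with
    | nil => simp [brList]
    | cons d cs =>
      refine List.isChain_cons_cons.2 ⟨?_, ih⟩
      have := mod_ne_mod_of_lt ha hab hbk
      cases c <;> cases d <;> simp only [Bool.false_eq_true, ↓reduceIte, ne_eq,
        not_false_eq_true, List.count_cons_of_ne, List.count_cons_self, mul_add, mul_one,
        Nat.add_mul_mod_self_left, Ne.symm this, IsEmpty.forall_iff, forall_const, and_true] <;>
        omega

lemma getLast?_brList {cs : List Bool} (hcs : cs ≠ []) :
    (brList a b k cs).getLast? = some a ∨ (brList a b k cs).getLast? = some b := by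
  induction cs with
  | nil => exact absurd rfl hcs
  | cons c cs ih =>
    cases cs with
    | nil => cases c <;> simp [brList]
    | cons d cs => simpa [brList] using ih (List.cons_ne_nil d cs)

lemma pos_and_mod_of_mem_brList (ha : 1 ≤ a) (hab : a < b) {cs : List Bool} {x : ℕ}
    (hx : x ∈ brList a b k cs) : 0 < x ∧ (x % k = a % k ∨ x % k = b % k) := by
  induction cs with
  | nil => simp [brList] at hx
  | cons c cs ih =>
    simp only [brList, List.mem_cons] at hx
    rcases hx with rfl | hx
    · cases c <;> simp only [Bool.false_eq_true, ↓reduceIte, Nat.add_mul_mod_self_left,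
      true_or, or_true, and_true] <;> omega
    · exact ih hx

theorem memBR_brList (ha : 1 ≤ a) (hab : a < b) (hbk : b ≤ k) {cs : List Bool} (hcs : cs ≠ []) :
    memBR a b k cs.length (brList a b k cs) :=
  ⟨pairwise_brList hab hbk cs, length_brList cs,
    fun _ hx => pos_and_mod_of_mem_brList ha hab hx,
    fun _ hx => count_brList_le_one ha hab hbk cs hx, getLast?_brList hcs,
    isChain_brList ha hab hbk cs⟩

lemma memBR_tail {m x : ℕ} {l : List ℕ} (h : memBR a b k m (x :: l)) (hl : l ≠ []) :
    memBR a b k (m - 1) l := by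
  obtain ⟨hsort, hlen, hparts, hcount, hlast, hchain⟩ := h
  obtain ⟨y, l, rfl⟩ := List.exists_cons_of_ne_nil hl
  refine ⟨hsort.of_cons, by simp only [List.length_cons] at hlen ⊢; omega,
    fun z hz => hparts z (List.mem_cons_of_mem x hz),
    fun z hz => List.count_le_count_cons.trans (hcount z hz), ?_, hchain.tail⟩
  rwa [List.getLast?_cons_cons] at hlast

lemma exists_brList_cons_eq (ha : 1 ≤ a) (hab : a < b) (hbk : b ≤ k) {m x : ℕ} {cs : List Bool}
    (hcs : cs ≠ []) (h : memBR a b k m (x :: brList a b k cs)) :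
    ∃ c, brList a b k (c :: cs) = x :: brList a b k cs := by
  obtain ⟨d, cs, rfl⟩ := List.exists_cons_of_ne_nil hcs
  obtain ⟨hsort, -, hparts, hcount, -, hchain⟩ := h
  set y := (if d then b else a) + k * cs.count true with hy
  have hbr : brList a b k (d :: cs) = y :: brList a b k cs := rfl
  rw [hbr] at hsort hcount hchain
  have hyx : y ≤ x := List.rel_of_pairwise_cons hsort List.mem_cons_self
  obtain ⟨⟨hxy, hstrict⟩, -⟩ := List.isChain_cons_cons.1 hchain
  have hne : x % k = b % k → x ≠ y := fun hx h => by simpa [h] using hcount x hx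
  refine ⟨decide (x % k = b % k), ?_⟩
  rw [brList, List.cons.injEq, and_iff_left rfl]
  have hmod := mod_ne_mod_of_lt ha hab hbk
  -- `x` is pinned down by its residue, since `y ≤ x ≤ y + k`, strictly below `y + k` when `y` is
  -- an `a`-part and strictly above `y` when `x` is a (non-repeatable) `b`-part.
  refine (Nat.eq_of_mod_eq_of_lt_add (k := k) ?_ ?_ ?_).symm
  · rw [Nat.add_mul_mod_self_left]
    rcases (hparts x List.mem_cons_self).2 with hx | hx <;> simp [hx, hmod]
  all_goals rcases (hparts x List.mem_cons_self).2 with hx | hx <;> cases d <;>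
    simp only [hy, hx, hmod, hmod.symm, Bool.false_eq_true, ↓reduceIte, Nat.add_mul_mod_self_left,
      forall_const, ne_eq, IsEmpty.forall_iff, decide_false, decide_true, not_false_eq_true,
      List.count_cons_of_ne, List.count_cons_self, mul_add, mul_one] at hstrict hne hyx hxy ⊢ <;>
    omega

theorem exists_brList_eq_of_memBR (ha : 1 ≤ a) (hab : a < b) (hbk : b ≤ k) {m : ℕ}
    {l : List ℕ} (h : memBR a b k m l) : ∃ cs, brList a b k cs = l := by
  induction l generalizing m with
  | nil => simpa using h.2.2.2.2.1
  | cons x l ih =>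
    by_cases hl : l = []
    · subst hl
      rcases h.2.2.2.2.1 with hx | hx <;>
        simp only [List.getLast?_singleton, Option.some.injEq] at hx
      exacts [⟨[false], by simp [brList, hx]⟩, ⟨[true], by simp [brList, hx]⟩]
    · obtain ⟨cs, rfl⟩ := ih (memBR_tail h hl)
      have hcs : cs ≠ [] := by rintro rfl; exact hl rfl
      obtain ⟨c, hc⟩ := exists_brList_cons_eq ha hab hbk hcs h
      exact ⟨c :: cs, hc⟩

theorem setOf_memBR_eq_range (ha : 1 ≤ a) (hab : a < b) (hbk : b ≤ k) {m : ℕ} (hm : 1 ≤ m) :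
    {l | memBR a b k m l} = Set.range (brList a b k ∘ List.ofFn (n := m)) := by
  ext l
  constructor
  · intro h
    obtain ⟨cs, rfl⟩ := exists_brList_eq_of_memBR ha hab hbk h
    have hlen : cs.length = m := by simpa using h.2.1
    subst hlen
    exact ⟨fun i => cs[i], congrArg (brList a b k) List.ofFn_getElem⟩
  · rintro ⟨f, rfl⟩
    simpa using memBR_brList ha hab hbk (cs := List.ofFn f)
      (by rw [ne_eq, List.ofFn_eq_nil_iff]; omega)

theorem finsum_partWeight_memBR (ha : 1 ≤ a) (hab : a < b) (hbk : b ≤ k) {m : ℕ} (hm : 1 ≤ m)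
    (u v q : ℂ) :
    ∑ᶠ l ∈ {l | memBR a b k m l}, partWeight a b k u v q l
      = ∏ i ∈ range m, (u * q ^ a + v * q ^ b * (q ^ k) ^ i) := by
  have hmod := mod_ne_mod_of_lt ha hab hbk
  rw [setOf_memBR_eq_range ha hab hbk hm,
    finsum_mem_range ((brList_injective hmod).comp List.ofFn_injective),
    finsum_eq_sum_of_fintype]
  exact sum_partWeight_brList_ofFn hmod u q m v

end BRList

/-- Generating function for the partitions in `BR_{a,b,k}(m)`:
`Σ_{λ ∈ BR_{a,b,k}(m)} u^{ℓ_a} v^{ℓ_b} q^{|λ|}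
  = Σ_{h=0}^{m} u^{m-h} v^h q^{ma + k C(h,2) + (b-a)h} [m, h]_k`. -/
theorem gen_BR_m (a b k m : ℕ) (ha : 1 ≤ a) (hab : a < b) (hbk : b ≤ k)
    (hm : 1 ≤ m) (q u v : ℂ) (hq : ‖q‖ < 1) :
    ∑ᶠ l ∈ {l : List ℕ | memBR a b k m l},
        u ^ lcount k a l * v ^ lcount k b l * q ^ l.sum
      = ∑ h ∈ Finset.range (m + 1), u ^ (m - h) * v ^ h *
          q ^ (m * a + k * Nat.choose h 2 + (b - a) * h) * gbinom (q ^ k) m h := by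
  have hqk : ‖q ^ k‖ < 1 := by
    rw [norm_pow]
    exact pow_lt_one₀ (norm_nonneg q) hq (by omega)
  change ∑ᶠ l ∈ {l | memBR a b k m l}, partWeight a b k u v q l = _
  rw [finsum_partWeight_memBR ha hab hbk hm, prod_add_mul_pow_eq_sum_gbinom (pow_succ_ne_one_of_norm_lt_one hqk),
    ← Nat.sum_antidiagonal_swap]
  simp only [Prod.fst_swap, Prod.snd_swap]
  rw [Nat.sum_antidiagonal_eq_sum_range_succ fun j h =>
    (u * q ^ a) ^ h * (v * q ^ b) ^ j * (q ^ k) ^ j.choose 2 * gbinom (q ^ k) m j]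
  refine sum_congr rfl fun h hh => ?_
  obtain ⟨d, rfl⟩ := Nat.exists_eq_add_of_le (Nat.lt_succ_iff.1 (mem_range.1 hh))
  obtain ⟨e, rfl⟩ := Nat.exists_eq_add_of_lt hab
  simp only [Nat.add_sub_cancel_left, show a + e + 1 - a = e + 1 by omega]
  ring
end
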